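/- Let L ≥ 1, ε ≥ 0, and let m, m̃ : ℕ → ℝ be sequences satisfying |m_k| ≤ L^k, |m̃_k| ≤ L^k and |m_k − m̃_k| ≤ L^k·ε for all k. Then for every n ≥ 1 the shifted Hankel determinants satisfy |g_n(m) − g_n(m̃)| ≤ n! · n · L^{n(n−1)+1} · ε. -/

import Mathlib

/-!
Expand both determinants by the Leibniz formula. The entry in row `i` and column `j` is
`m (i + s j)`, where the column shift `s j` is `j` except in the last column, where it is `n`;
so the entries are bounded by the rank-one weight `L ^ i * L ^ s j`, and every permutation term
has total weight `L ^ (∑ i + ∑ s j) = L ^ (n (n - 1) + 1)`. A product of `n` factors changes by at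
most `n` times its weight times `ε` when each factor changes by at most its weight times `ε`, and
there are `n!` terms.
-/

/-- The shifted Hankel determinant `g_n(m)`: the determinant of the `n × n`
matrix with `(i,j)`-entry `m (i + j)` for `j ≤ n - 2` and `m (i + n)` in the last
column `j = n - 1`. -/
noncomputable def shiftedHankelDet (m : ℕ → ℝ) (n : ℕ) : ℝ :=
  Matrix.det (Matrix.of fun i j : Fin n =>
    if (j : ℕ) = n - 1 then m ((i : ℕ) + n) else m ((i : ℕ) + (j : ℕ)))

open Finset

variable {R : Type*} [CommRing R] [LinearOrder R] [IsStrictOrderedRing R]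

lemma abs_prod_sub_prod_le {ι : Type*} (s : Finset ι) (a b c : ι → R) (ε : R)
    (ha : ∀ i ∈ s, |a i| ≤ c i) (hb : ∀ i ∈ s, |b i| ≤ c i)
    (hab : ∀ i ∈ s, |a i - b i| ≤ c i * ε) :
    |∏ i ∈ s, a i - ∏ i ∈ s, b i| ≤ #s * (∏ i ∈ s, c i) * ε := by
  classical
  induction s using Finset.induction_on with
  | empty => simp
  | @insert x s hx ih =>
    simp only [mem_insert, forall_eq_or_imp] at ha hb hab
    have hcx : 0 ≤ c x := (abs_nonneg _).trans ha.1
    have hcxε : 0 ≤ c x * ε := (abs_nonneg _).trans hab.1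
    have hprod_b : |∏ i ∈ s, b i| ≤ ∏ i ∈ s, c i := by
      rw [abs_prod]
      exact prod_le_prod (fun i _ => abs_nonneg _) hb.2
    rw [prod_insert hx, prod_insert hx, prod_insert hx, card_insert_of_notMem hx]
    calc |a x * ∏ i ∈ s, a i - b x * ∏ i ∈ s, b i|
        = |a x * (∏ i ∈ s, a i - ∏ i ∈ s, b i) + (a x - b x) * ∏ i ∈ s, b i| := by congr 1; ring
      _ ≤ |a x| * |∏ i ∈ s, a i - ∏ i ∈ s, b i| + |a x - b x| * |∏ i ∈ s, b i| := by
          rw [← abs_mul, ← abs_mul]; exact abs_add_le _ _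
      _ ≤ c x * (#s * (∏ i ∈ s, c i) * ε) + c x * ε * ∏ i ∈ s, c i := by
          gcongr
          exacts [ha.1, ih ha.2 hb.2 hab.2, hab.1]
      _ = (↑(#s + 1) : R) * (c x * ∏ i ∈ s, c i) * ε := by push_cast; ring

lemma abs_det_sub_det_le {ι : Type*} [Fintype ι] [DecidableEq ι]
    (A B : Matrix ι ι R) (x y : ι → R) (ε : R)
    (hA : ∀ i j, |A i j| ≤ x i * y j) (hB : ∀ i j, |B i j| ≤ x i * y j)
    (hAB : ∀ i j, |A i j - B i j| ≤ x i * y j * ε) :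
    |A.det - B.det| ≤
      (Fintype.card ι).factorial * Fintype.card ι * ((∏ i, x i) * ∏ j, y j) * ε := by
  have hterm : ∀ σ : Equiv.Perm ι,
      |(Equiv.Perm.sign σ : R) * ∏ i, A (σ i) i - (Equiv.Perm.sign σ : R) * ∏ i, B (σ i) i|
        ≤ Fintype.card ι * ((∏ i, x i) * ∏ j, y j) * ε := by
    intro σ
    rw [← mul_sub, abs_mul, ← Int.cast_abs, Equiv.Perm.sign_abs, Int.cast_one, one_mul]
    have := abs_prod_sub_prod_le univ (fun i => A (σ i) i) (fun i => B (σ i) i)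
      (fun i => x (σ i) * y i) ε (fun i _ => hA _ _) (fun i _ => hB _ _) (fun i _ => hAB _ _)
    rwa [prod_mul_distrib, Equiv.prod_comp σ x, card_univ] at this
  rw [Matrix.det_apply', Matrix.det_apply', ← sum_sub_distrib]
  calc _ ≤ ∑ σ : Equiv.Perm ι, |(Equiv.Perm.sign σ : R) * ∏ i, A (σ i) i
          - (Equiv.Perm.sign σ : R) * ∏ i, B (σ i) i| := abs_sum_le_sum_abs _ _
    _ ≤ ∑ _σ : Equiv.Perm ι, Fintype.card ι * ((∏ i, x i) * ∏ j, y j) * ε :=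
        sum_le_sum fun σ _ => hterm σ
    _ = _ := by rw [sum_const, card_univ, Fintype.card_perm, nsmul_eq_mul]; ring

def shiftedHankelShift (n : ℕ) (j : ℕ) : ℕ := if j = n - 1 then n else j

lemma shiftedHankelDet_eq_det (m : ℕ → ℝ) (n : ℕ) :
    shiftedHankelDet m n =
      (Matrix.of fun i j : Fin n => m (i + shiftedHankelShift n j)).det := by
  unfold shiftedHankelDet shiftedHankelShift
  congr 1
  ext i j
  simp only [Matrix.of_apply]
  split_ifs <;> rfl

lemma sum_range_shiftedHankelShift {n : ℕ} (hn : 1 ≤ n) :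
    ∑ j ∈ range n, shiftedHankelShift n j = ∑ j ∈ range n, j + 1 := by
  obtain ⟨k, rfl⟩ := Nat.exists_eq_add_of_le' hn
  have hlow : ∀ j ∈ range k, shiftedHankelShift (k + 1) j = j := fun j hj => by
    simp [shiftedHankelShift, (mem_range.mp hj).ne]
  rw [sum_range_succ, sum_range_succ, sum_congr rfl hlow]
  simp [shiftedHankelShift, add_assoc]

theorem stmt_12_general (L ε : ℝ) (m mt : ℕ → ℝ)
    (hm : ∀ k, |m k| ≤ L ^ k) (hmt : ∀ k, |mt k| ≤ L ^ k)
    (hclose : ∀ k, |m k - mt k| ≤ L ^ k * ε) :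
    ∀ n : ℕ, 1 ≤ n →
      |shiftedHankelDet m n - shiftedHankelDet mt n| ≤
        (n.factorial : ℝ) * n * L ^ (n * (n - 1) + 1) * ε := by
  intro n hn
  have hweight : (∏ i : Fin n, L ^ (i : ℕ)) * ∏ j : Fin n, L ^ shiftedHankelShift n j
      = L ^ (n * (n - 1) + 1) := by
    rw [prod_pow_eq_pow_sum, prod_pow_eq_pow_sum, ← pow_add,
      Fin.sum_univ_eq_sum_range (fun j => j), Fin.sum_univ_eq_sum_range (shiftedHankelShift n),
      sum_range_shiftedHankelShift hn, ← Finset.sum_range_id_mul_two]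
    ring
  have := abs_det_sub_det_le (Matrix.of fun i j : Fin n => m (i + shiftedHankelShift n j))
    (Matrix.of fun i j : Fin n => mt (i + shiftedHankelShift n j)) (fun i => L ^ (i : ℕ))
    (fun j => L ^ shiftedHankelShift n j) ε
    (fun i j => (hm _).trans_eq (pow_add _ _ _)) (fun i j => (hmt _).trans_eq (pow_add _ _ _))
    (fun i j => (hclose _).trans_eq (by rw [pow_add]))
  rwa [hweight, Fintype.card_fin, ← shiftedHankelDet_eq_det, ← shiftedHankelDet_eq_det] at this

/-- If `|m_k| ≤ L^k`, `|m̃_k| ≤ L^k` and `|m_k - m̃_k| ≤ L^k ε` for all `k`, then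
for every `n ≥ 1` the shifted Hankel determinants satisfy
`|g_n(m) - g_n(m̃)| ≤ n! · n · L^(n(n-1)+1) · ε`. -/
theorem stmt_12 (L ε : ℝ) (hL : 1 ≤ L) (hε : 0 ≤ ε) (m mt : ℕ → ℝ)
    (hm : ∀ k, |m k| ≤ L ^ k) (hmt : ∀ k, |mt k| ≤ L ^ k)
    (hclose : ∀ k, |m k - mt k| ≤ L ^ k * ε) :
    ∀ n : ℕ, 1 ≤ n →
      |shiftedHankelDet m n - shiftedHankelDet mt n| ≤
        (n.factorial : ℝ) * n * L ^ (n * (n - 1) + 1) * ε :=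
  stmt_12_general L ε m mt hm hmt hclose
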